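/- Let N = 4 and define Z⁰_{1,0}(x) = (1 − |x̄|² − x₄²)/(|x̄|² + (x₄+1)²)². Let Δ_{x̄} denote the Laplacian with respect to the first three variables x₁, x₂, x₃, so that Δ_{x̄} W_{1,0}(x) = 2(|x̄|² − 3(x₄+1)²)/(|x̄|² + (x₄+1)²)³. Then there exists a constant C > 0 such that for all R ≥ 2: | ∫_{B⁴_+(0,R)} x₄² (Δ_{x̄} W_{1,0})(x) Z⁰_{1,0}(x) dx − (π/8) |S²| log R | ≤ C, where B⁴_+(0,R) = {x ∈ ℝ⁴ : x₄ > 0, |x| < R} and |S²| = 4π. In particular ∫_{B⁴_+(0,R)} x₄² Δ_{x̄} W_{1,0} Z⁰_{1,0} dx = (π/8)|S²| log R + O(1) as R → ∞. -/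

import Mathlib

open MeasureTheory Filter Topology

noncomputable section

/-- The model for `ℝ^N_+`: pairs `(x̄, t)` with `x̄ ∈ ℝ^n` (Euclidean) and `t ∈ ℝ`;
the open upper half-space is `{p | 0 < p.2}`. -/
abbrev HSp (n : ℕ) := EuclideanSpace ℝ (Fin n) × ℝ

/-- The open upper half-space. -/
def upperHalf (n : ℕ) : Set (HSp n) := {p | 0 < p.2}

/-- Directional derivative of `f` at `x` in direction `v`. -/
def pdv {n : ℕ} (v : HSp n) (f : HSp n → ℝ) (x : HSp n) : ℝ := fderiv ℝ f x v

/-- The `i`-th horizontal standard basis vector. -/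
def eH {n : ℕ} (i : Fin n) : HSp n := (EuclideanSpace.single i 1, 0)

/-- The vertical standard basis vector. -/
def eV {n : ℕ} : HSp n := (0, 1)

/-- The Laplacian `Δf = ∑ᵢ ∂ᵢᵢ f + ∂_NN f`. -/
def lap {n : ℕ} (f : HSp n → ℝ) (x : HSp n) : ℝ :=
  (∑ i : Fin n, pdv (eH i) (pdv (eH i) f) x) + pdv eV (pdv eV f) x

/-- The Euclidean length `|x|` of a point `x = (x̄, t)`. -/
def rad {n : ℕ} (x : HSp n) : ℝ := Real.sqrt (‖x.1‖ ^ 2 + x.2 ^ 2)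

/-- The bubble `W_{λ,ξ}`. -/
def Bub (N : ℕ) (lam : ℝ) (ξ : EuclideanSpace ℝ (Fin (N - 1))) (x : HSp (N - 1)) : ℝ :=
  lam ^ (((N : ℝ) - 2) / 2) / (‖x.1 - ξ‖ ^ 2 + (x.2 + lam) ^ 2) ^ (((N : ℝ) - 2) / 2)

/-- The trace `w_{λ,ξ}` of the bubble on the boundary. -/
def bub (N : ℕ) (lam : ℝ) (ξ y : EuclideanSpace ℝ (Fin (N - 1))) : ℝ := Bub N lam ξ (y, 0)

/-- The bubble `W_{1,0}` in dimension `N = 4`. -/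
def W4 : HSp 3 → ℝ := fun x => 1 / (‖x.1‖ ^ 2 + (x.2 + 1) ^ 2)

/-- `Z⁰_{1,0}` in dimension `N = 4`. -/
def Z4 : HSp 3 → ℝ := fun x => (1 - ‖x.1‖ ^ 2 - x.2 ^ 2) / (‖x.1‖ ^ 2 + (x.2 + 1) ^ 2) ^ 2

/-- The horizontal Laplacian of `W_{1,0}` in dimension `N = 4`:
`Δ_{x̄} W_{1,0}(x) = 2(|x̄|² - 3(x₄+1)²)/(|x̄|² + (x₄+1)²)³`. -/
def lapHorizW4 : HSp 3 → ℝ := fun x =>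
  2 * (‖x.1‖ ^ 2 - 3 * (x.2 + 1) ^ 2) / (‖x.1‖ ^ 2 + (x.2 + 1) ^ 2) ^ 3

/-! Write `s = |x̄|` and `t = x₄`. The integrand is
`2t²(s² - 3(t+1)²)(1 - s² - t²)/(s² + (t+1)²)⁵`; at infinity its homogeneous part of degree `-4`
is `g = 2t²(3t² - s²)/(s² + t²)⁴`, and the difference is `O(|x|⁻⁵)` for `|x| ≥ 1`, while the
integrand is bounded on the unit ball. So the integrand minus `g · 1_{|x| ≥ 1}` is integrable over
the half-space, and it remains to integrate `g` over the half-annulus `1 ≤ |x| < R`. Polar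
coordinates in `x̄ ∈ ℝ³` contribute the factor `|S²| s²`, and polar coordinates
`(s, t) = (r cos θ, r sin θ)` turn `s² g r` into `2cos²θ sin²θ (3sin²θ - cos²θ) / r`, whose integral
over `1 ≤ r < R`, `0 < θ < π/2` is `(π/8) log R`. -/

open Set Real

def integrandProfile (s t : ℝ) : ℝ :=
  2 * t ^ 2 * (s ^ 2 - 3 * (t + 1) ^ 2) * (1 - s ^ 2 - t ^ 2) / (s ^ 2 + (t + 1) ^ 2) ^ 5

def leadingProfile (s t : ℝ) : ℝ := 2 * t ^ 2 * (3 * t ^ 2 - s ^ 2) / (s ^ 2 + t ^ 2) ^ 4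

theorem integrand_eq_integrandProfile (x : HSp 3) :
    x.2 ^ 2 * lapHorizW4 x * Z4 x = integrandProfile ‖x.1‖ x.2 := by
  simp only [lapHorizW4, Z4, integrandProfile]
  generalize ‖x.1‖ ^ 2 + (x.2 + 1) ^ 2 = D
  ring

theorem abs_leadingProfile_le {s t : ℝ} (h : 1 ≤ s ^ 2 + t ^ 2) : |leadingProfile s t| ≤ 6 := by
  have hQ : 0 < (s ^ 2 + t ^ 2) ^ 4 := by positivity
  have hA : |3 * t ^ 2 - s ^ 2| ≤ 3 * (s ^ 2 + t ^ 2) := by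
    rw [abs_le]; constructor <;> nlinarith
  rw [leadingProfile, abs_div, abs_of_pos hQ, div_le_iff₀ hQ, abs_mul,
    abs_of_nonneg (by positivity : (0 : ℝ) ≤ 2 * t ^ 2)]
  calc 2 * t ^ 2 * |3 * t ^ 2 - s ^ 2| ≤ 2 * (s ^ 2 + t ^ 2) * (3 * (s ^ 2 + t ^ 2)) := by
        gcongr; nlinarith
    _ ≤ 6 * (s ^ 2 + t ^ 2) ^ 4 := by nlinarith [one_le_pow₀ (n := 2) h]

theorem abs_integrandProfile_le {s t : ℝ} (ht : 0 ≤ t) (h : s ^ 2 + t ^ 2 ≤ 1) :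
    |integrandProfile s t| ≤ 26 := by
  have hD : 1 ≤ (s ^ 2 + (t + 1) ^ 2) ^ 5 := one_le_pow₀ (by nlinarith)
  have hD0 : 0 < (s ^ 2 + (t + 1) ^ 2) ^ 5 := by linarith
  have h1 : |s ^ 2 - 3 * (t + 1) ^ 2| ≤ 13 := by rw [abs_le]; constructor <;> nlinarith
  have h2 : |1 - s ^ 2 - t ^ 2| ≤ 1 := by rw [abs_le]; constructor <;> nlinarith
  rw [integrandProfile, abs_div, abs_of_pos hD0, div_le_iff₀ hD0,
    abs_mul, abs_mul, abs_of_nonneg (by positivity : (0 : ℝ) ≤ 2 * t ^ 2)]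
  calc 2 * t ^ 2 * |s ^ 2 - 3 * (t + 1) ^ 2| * |1 - s ^ 2 - t ^ 2| ≤ 2 * 1 * 13 * 1 := by
        gcongr; nlinarith
    _ ≤ 26 * (s ^ 2 + (t + 1) ^ 2) ^ 5 := by linarith

/- Each term is `O((s² + t²)^(-5/2))` for `t ≥ 0`, `s² + t² ≥ 1`: the denominators are at least
`(s² + t²)⁵`, and `(s² + (t+1)²)⁵ - (s² + t²)⁵ ≤ 5(2t+1)(s² + (t+1)²)⁴`. -/
theorem integrandProfile_sub_leadingProfile {s t : ℝ} (hQ : s ^ 2 + t ^ 2 ≠ 0)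
    (hD : s ^ 2 + (t + 1) ^ 2 ≠ 0) :
    integrandProfile s t - leadingProfile s t =
      2 * t ^ 2 * (s ^ 2 - 3 * t ^ 2) / (s ^ 2 + (t + 1) ^ 2) ^ 5
      + 2 * t ^ 2 * (s ^ 2 - 3 * t ^ 2) * ((s ^ 2 + (t + 1) ^ 2) ^ 5 - (s ^ 2 + t ^ 2) ^ 5)
          / ((s ^ 2 + (t + 1) ^ 2) ^ 5 * (s ^ 2 + t ^ 2) ^ 4)
      + 6 * t ^ 2 * (2 * t + 1) * (s ^ 2 + t ^ 2 - 1) / (s ^ 2 + (t + 1) ^ 2) ^ 5 := by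
  rw [integrandProfile, leadingProfile]
  field_simp
  ring

theorem abs_integrandProfile_sub_leadingProfile_le {s t : ℝ} (ht : 0 ≤ t)
    (h : 1 ≤ s ^ 2 + t ^ 2) :
    |integrandProfile s t - leadingProfile s t| ≤ 114 / √(s ^ 2 + t ^ 2) ^ 5 := by
  set r := √(s ^ 2 + t ^ 2)
  have hr2 : r ^ 2 = s ^ 2 + t ^ 2 := sq_sqrt (by positivity)
  have hr1 : 1 ≤ r := one_le_sqrt.mpr h
  have ht2 : t ^ 2 ≤ r ^ 2 := by nlinarith
  have htr : t ≤ r := by nlinarith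
  set D := s ^ 2 + (t + 1) ^ 2 with hD
  have hrD : r ^ 2 ≤ D := by nlinarith
  have hA : |s ^ 2 - 3 * t ^ 2| ≤ 3 * r ^ 2 := by rw [abs_le]; constructor <;> nlinarith
  have hu : 2 * t + 1 ≤ 3 * r := by linarith
  have hP0 : 0 ≤ D ^ 5 - (r ^ 2) ^ 5 := by
    have := pow_le_pow_left₀ (by positivity) hrD 5; linarith
  have hP : D ^ 5 - (r ^ 2) ^ 5 ≤ 5 * (2 * t + 1) * D ^ 4 := by
    have hDQ : D - r ^ 2 = 2 * t + 1 := by rw [hr2, hD]; ring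
    have e : D ^ 5 - (r ^ 2) ^ 5 = (D - r ^ 2) * (D ^ 4 + D ^ 3 * r ^ 2 + D ^ 2 * (r ^ 2) ^ 2
        + D * (r ^ 2) ^ 3 + (r ^ 2) ^ 4) := by ring
    rw [e, hDQ, mul_comm 5, mul_assoc]
    gcongr
    have := pow_le_pow_left₀ (by positivity) hrD
    nlinarith [this 2, this 3, this 4, pow_le_pow_left₀ (sq_nonneg r) hrD 2]
  have hr0 : 0 < r := by linarith
  rw [integrandProfile_sub_leadingProfile (by positivity) (by positivity), ← hr2]
  have h1 : |2 * t ^ 2 * (s ^ 2 - 3 * t ^ 2) / D ^ 5| ≤ 6 / r ^ 5 := by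
    rw [abs_div, abs_mul, abs_of_nonneg (by positivity : (0:ℝ) ≤ 2 * t ^ 2),
      abs_of_pos (by positivity : (0:ℝ) < D ^ 5)]
    calc 2 * t ^ 2 * |s ^ 2 - 3 * t ^ 2| / D ^ 5 ≤ 2 * r ^ 2 * (3 * r ^ 2) / (r ^ 2) ^ 5 := by
          gcongr
      _ = 6 / r ^ 6 := by field_simp; ring
      _ ≤ 6 / r ^ 5 := by gcongr; norm_num
  have h2 : |2 * t ^ 2 * (s ^ 2 - 3 * t ^ 2) * (D ^ 5 - (r ^ 2) ^ 5) / (D ^ 5 * (r ^ 2) ^ 4)|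
      ≤ 90 / r ^ 5 := by
    rw [abs_div, abs_mul, abs_mul, abs_of_nonneg (by positivity : (0:ℝ) ≤ 2 * t ^ 2),
      abs_of_nonneg hP0, abs_of_pos (by positivity : (0:ℝ) < D ^ 5 * (r ^ 2) ^ 4)]
    calc 2 * t ^ 2 * |s ^ 2 - 3 * t ^ 2| * (D ^ 5 - (r ^ 2) ^ 5) / (D ^ 5 * (r ^ 2) ^ 4)
        ≤ 2 * r ^ 2 * (3 * r ^ 2) * (5 * (2 * t + 1) * D ^ 4) / (D ^ 5 * (r ^ 2) ^ 4) := by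
          gcongr
      _ = 30 * (2 * t + 1) / (D * r ^ 4) := by field_simp; ring
      _ ≤ 30 * (3 * r) / (r ^ 2 * r ^ 4) := by gcongr
      _ = 90 / r ^ 5 := by field_simp; ring
  have h3 : |6 * t ^ 2 * (2 * t + 1) * (r ^ 2 - 1) / D ^ 5| ≤ 18 / r ^ 5 := by
    have hr2' : 0 ≤ r ^ 2 - 1 := by nlinarith
    rw [abs_of_nonneg (by positivity)]
    calc 6 * t ^ 2 * (2 * t + 1) * (r ^ 2 - 1) / D ^ 5
        ≤ 6 * r ^ 2 * (3 * r) * r ^ 2 / (r ^ 2) ^ 5 := by gcongr; linarith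
      _ = 18 / r ^ 5 := by field_simp; ring
  calc _ ≤ _ := abs_add_three _ _ _
    _ ≤ 6 / r ^ 5 + 90 / r ^ 5 + 18 / r ^ 5 := by gcongr
    _ = 114 / r ^ 5 := by ring

def angularProfile (θ : ℝ) : ℝ := 2 * cos θ ^ 2 * sin θ ^ 2 * (3 * sin θ ^ 2 - cos θ ^ 2)

theorem hasDerivAt_angularPrimitive (θ : ℝ) :
    HasDerivAt (fun θ => θ / 4 - sin (2 * θ) / 8 - sin (4 * θ) / 16 + sin (6 * θ) / 24)
      (angularProfile θ) θ := by
  have hsin (c : ℝ) : HasDerivAt (fun θ => sin (c * θ)) (cos (c * θ) * c) θ := by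
    simpa using ((hasDerivAt_id θ).const_mul c).sin
  refine ((((hasDerivAt_id θ).div_const 4).sub ((hsin 2).div_const 8)).sub
      ((hsin 4).div_const 16) |>.add ((hsin 6).div_const 24)).congr_deriv ?_
  rw [angularProfile, show 4 * θ = 2 * (2 * θ) by ring, show 6 * θ = 3 * (2 * θ) by ring,
    cos_two_mul (2 * θ), cos_three_mul, cos_two_mul θ]
  linear_combination (8 * cos θ ^ 4 - 6 * cos θ ^ 2 * sin θ ^ 2 - 6 * cos θ ^ 2)
    * sin_sq_add_cos_sq θ

theorem setIntegral_angularProfile : ∫ θ in Ioo 0 (π / 2), angularProfile θ = π / 8 := by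
  rw [← integral_Ioc_eq_integral_Ioo, ← intervalIntegral.integral_of_le (by positivity),
    intervalIntegral.integral_eq_sub_of_hasDerivAt (fun θ _ => hasDerivAt_angularPrimitive θ)
    ((by unfold angularProfile; fun_prop : Continuous angularProfile).intervalIntegrable _ _)]
  have h2 : 2 * (π / 2) = π := by ring
  have h4 : 4 * (π / 2) = 2 * π := by ring
  have h6 : 6 * (π / 2) = π + 2 * π := by ring
  simp only [h2, h4, h6, sin_add, sin_pi, sin_two_pi, mul_zero, sin_zero]
  ring

theorem integral_Ico_one_inv {R : ℝ} (hR : 1 ≤ R) : ∫ r in Ico 1 R, r⁻¹ = log R := by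
  rw [integral_Ico_eq_integral_Ioo, ← integral_Ioc_eq_integral_Ioo,
    ← intervalIntegral.integral_of_le hR, integral_inv_of_pos one_pos (by linarith), div_one]

-- needed to see through the defeq `volume = volume.prod volume`
instance (n : ℕ) : (volume : Measure (HSp n)).IsAddHaarMeasure :=
  Measure.prod.instIsAddHaarMeasure _ _

theorem integrableOn_of_isBounded {α E : Type*} [PseudoMetricSpace α] [ProperSpace α]
    [MeasurableSpace α] [NormedAddCommGroup E] {μ : Measure α} [IsFiniteMeasureOnCompacts μ]
    {s : Set α} {f : α → E} (hs : MeasurableSet s) (hb : Bornology.IsBounded s)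
    (hf : AEStronglyMeasurable f μ) {M : ℝ} (hM : ∀ x ∈ s, ‖f x‖ ≤ M) : IntegrableOn f s μ :=
  Measure.integrableOn_of_bounded hb.measure_lt_top.ne hf ((ae_restrict_iff' hs).2 (ae_of_all _ hM))

theorem integral_comp_norm_fst (φ : ℝ × ℝ → ℝ)
    (hφ : Integrable fun x : HSp 3 => φ (‖x.1‖, x.2))
    (hφ' : IntegrableOn (fun p : ℝ × ℝ => p.1 ^ 2 * φ p) (Ioi 0 ×ˢ univ)) :
    ∫ x : HSp 3, φ (‖x.1‖, x.2) = 4 * π * ∫ p in Ioi 0 ×ˢ univ, p.1 ^ 2 * φ p := by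
  rw [Measure.volume_eq_prod] at hφ hφ'
  rw [Measure.volume_eq_prod, Measure.volume_eq_prod ℝ ℝ, integral_prod _ hφ,
    integral_fun_norm_addHaar volume (fun s => ∫ t, φ (s, t)), setIntegral_prod _ hφ',
    Measure.restrict_univ]
  simp only [finrank_euclideanSpace, Fintype.card_fin, measureReal_def,
    EuclideanSpace.volume_ball_fin_three, ENNReal.ofReal_one, one_pow, one_mul,
    Nat.add_one_sub_one, smul_eq_mul, nsmul_eq_mul, Nat.cast_ofNat, integral_const_mul]
  rw [ENNReal.toReal_ofReal (by positivity)]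
  ring

theorem setIntegral_Ioi_prod_univ_eq_polar (ψ : ℝ × ℝ → ℝ) :
    ∫ p in Ioi 0 ×ˢ univ, ψ p =
      ∫ q in Ioi 0 ×ˢ Ioo (-(π / 2)) (π / 2), q.1 * ψ (q.1 * cos q.2, q.1 * sin q.2) := by
  have hsub : Ioi 0 ×ˢ Ioo (-(π / 2)) (π / 2) ⊆ polarCoord.target := by
    rw [polarCoord_target]
    exact prod_mono subset_rfl (Ioo_subset_Ioo (by linarith [pi_pos]) (by linarith [pi_pos]))
  rw [← integral_indicator (measurableSet_Ioi.prod .univ), ← integral_comp_polarCoord_symm,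
    ← inter_eq_right.2 hsub, ← setIntegral_indicator (measurableSet_Ioi.prod measurableSet_Ioo)]
  refine setIntegral_congr_fun polarCoord.open_target.measurableSet fun q hq => ?_
  obtain ⟨hr, hθ⟩ : 0 < q.1 ∧ q.2 ∈ Ioo (-π) π := by simpa [polarCoord_target] using hq
  have hcos : 0 < q.1 * cos q.2 ↔ q.2 ∈ Ioo (-(π / 2)) (π / 2) := by
    rw [mul_pos_iff_of_pos_left hr]
    refine ⟨fun h => ⟨?_, ?_⟩, cos_pos_of_mem_Ioo⟩
    · by_contra! h'
      have := cos_nonpos_of_pi_div_two_le_of_le (x := -q.2) (by linarith) (by linarith [hθ.1])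
      rw [cos_neg] at this; linarith
    · by_contra! h'
      linarith [cos_nonpos_of_pi_div_two_le_of_le h' (by linarith [hθ.2])]
  simp only [indicator, mem_prod, mem_Ioi, mem_univ, and_true, polarCoord_symm_apply, hcos, hr,
    true_and, smul_eq_mul]
  split_ifs <;> simp

def halfBall (n : ℕ) (R : ℝ) : Set (HSp n) := {x | 0 < x.2 ∧ rad x < R}

def halfAnnulus (R : ℝ) : Set (ℝ × ℝ) :=
  {p | 0 < p.2 ∧ 1 ≤ √(p.1 ^ 2 + p.2 ^ 2) ∧ √(p.1 ^ 2 + p.2 ^ 2) < R}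

-- cut off inside the unit ball, where `leadingProfile` is not integrable
def leadingTerm : HSp 3 → ℝ :=
  {x : HSp 3 | 1 ≤ rad x}.indicator fun x => leadingProfile ‖x.1‖ x.2

theorem norm_le_rad {n : ℕ} (x : HSp n) : ‖x‖ ≤ rad x :=
  max_le (le_sqrt_of_sq_le (by nlinarith)) (abs_le_sqrt (by nlinarith))

theorem continuous_rad {n : ℕ} : Continuous (rad : HSp n → ℝ) := by
  unfold rad; fun_prop

theorem measurableSet_halfBall (n : ℕ) (R : ℝ) : MeasurableSet (halfBall n R) :=
  (measurableSet_lt measurable_const measurable_snd).inter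
    (measurableSet_lt continuous_rad.measurable measurable_const)

theorem isBounded_halfBall (n : ℕ) (R : ℝ) : Bornology.IsBounded (halfBall n R) :=
  Metric.isBounded_ball.subset fun x hx => mem_ball_zero_iff.2 ((norm_le_rad x).trans_lt hx.2)

theorem measurableSet_halfAnnulus (R : ℝ) : MeasurableSet (halfAnnulus R) := by
  have hρ : Measurable fun p : ℝ × ℝ => √(p.1 ^ 2 + p.2 ^ 2) := by fun_prop
  exact (measurableSet_lt measurable_const measurable_snd).inter
    ((measurableSet_le measurable_const hρ).inter (measurableSet_lt hρ measurable_const))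

theorem isBounded_halfAnnulus (R : ℝ) : Bornology.IsBounded (halfAnnulus R) :=
  Metric.isBounded_ball.subset fun p hp => mem_ball_zero_iff.2 <|
    max_lt ((abs_le_sqrt (by nlinarith)).trans_lt hp.2.2)
      ((abs_le_sqrt (by nlinarith)).trans_lt hp.2.2)

theorem measurable_leadingTerm : Measurable leadingTerm :=
  (Measurable.indicator (by unfold leadingProfile; fun_prop)
    (measurableSet_le measurable_const continuous_rad.measurable))

theorem abs_leadingTerm_le (x : HSp 3) : |leadingTerm x| ≤ 6 := by
  unfold leadingTerm indicator
  split_ifs with h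
  · exact abs_leadingProfile_le (one_le_sqrt.mp h)
  · norm_num

theorem indicator_halfBall_leadingTerm (R : ℝ) :
    (halfBall 3 R).indicator leadingTerm =
      fun x => (halfAnnulus R).indicator (fun p => leadingProfile p.1 p.2) (‖x.1‖, x.2) := by
  have hset : halfBall 3 R ∩ {x | 1 ≤ rad x} =
      (fun x : HSp 3 => (‖x.1‖, x.2)) ⁻¹' halfAnnulus R := by
    ext x
    simp only [halfBall, halfAnnulus, rad, mem_inter_iff, mem_ofPred_eq, mem_preimage]
    tauto
  ext x
  rw [leadingTerm, indicator_indicator, hset]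
  exact indicator_comp_right (g := fun p : ℝ × ℝ => leadingProfile p.1 p.2) _

theorem polar_leadingProfile_indicator_halfAnnulus (R : ℝ) {r θ : ℝ} (hr : 0 < r)
    (hθ : θ ∈ Ioo (-(π / 2)) (π / 2)) :
    r * ((r * cos θ) ^ 2 *
        (halfAnnulus R).indicator (fun p => leadingProfile p.1 p.2) (r * cos θ, r * sin θ)) =
      (Ico 1 R).indicator (fun r => r⁻¹) r * (Ioo 0 (π / 2)).indicator angularProfile θ := by
  have hsq : (r * cos θ) ^ 2 + (r * sin θ) ^ 2 = r ^ 2 := by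
    linear_combination r ^ 2 * cos_sq_add_sin_sq θ
  have hsin : 0 < r * sin θ ↔ θ ∈ Ioo 0 (π / 2) := by
    rw [mul_pos_iff_of_pos_left hr]
    refine ⟨fun h => ⟨?_, hθ.2⟩, fun h => sin_pos_of_pos_of_lt_pi h.1 (by linarith [h.2, pi_pos])⟩
    by_contra! h'
    linarith [sin_nonpos_of_nonpos_of_neg_pi_le h' (by linarith [hθ.1, pi_pos])]
  have hmem : (r * cos θ, r * sin θ) ∈ halfAnnulus R ↔ r ∈ Ico 1 R ∧ θ ∈ Ioo 0 (π / 2) := by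
    simp only [halfAnnulus, mem_ofPred_eq, hsq, sqrt_sq hr.le, hsin, mem_Ico]
    tauto
  by_cases h : r ∈ Ico 1 R ∧ θ ∈ Ioo 0 (π / 2)
  · rw [indicator_of_mem (hmem.2 h), indicator_of_mem h.1, indicator_of_mem h.2]
    simp only [leadingProfile, angularProfile, hsq]
    field_simp
  · rw [indicator_of_notMem (mt hmem.1 h), mul_zero, mul_zero]
    rcases not_and_or.mp h with h | h <;> simp [h]

theorem setIntegral_leadingTerm_halfBall {R : ℝ} (hR : 1 ≤ R) :
    ∫ x in halfBall 3 R, leadingTerm x = π / 8 * (4 * π) * log R := by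
  set g := (halfAnnulus R).indicator fun p : ℝ × ℝ => leadingProfile p.1 p.2
  have hcyl : Integrable fun x : HSp 3 => g (‖x.1‖, x.2) := by
    rw [← indicator_halfBall_leadingTerm, integrable_indicator_iff (measurableSet_halfBall 3 R)]
    exact integrableOn_of_isBounded (measurableSet_halfBall 3 R) (isBounded_halfBall 3 R)
      measurable_leadingTerm.aestronglyMeasurable fun x _ => abs_leadingTerm_le x
  have hplane : IntegrableOn (fun p : ℝ × ℝ => p.1 ^ 2 * g p) (Ioi 0 ×ˢ univ) := by
    rw [show (fun p : ℝ × ℝ => p.1 ^ 2 * g p) =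
        (halfAnnulus R).indicator fun p => p.1 ^ 2 * leadingProfile p.1 p.2 from
      funext fun p => (indicator_mul_right _ (fun p : ℝ × ℝ => p.1 ^ 2) _).symm]
    refine ((integrable_indicator_iff (measurableSet_halfAnnulus R)).2 ?_).integrableOn
    refine integrableOn_of_isBounded (measurableSet_halfAnnulus R) (isBounded_halfAnnulus R)
      (by unfold leadingProfile; fun_prop) (M := R ^ 2 * 6) fun p hp => ?_
    have hp1 : p.1 ^ 2 ≤ R ^ 2 := by
      have := (sqrt_lt' (by linarith)).1 hp.2.2
      nlinarith
    rw [norm_mul, Real.norm_eq_abs, Real.norm_eq_abs, abs_of_nonneg (sq_nonneg _)]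
    exact mul_le_mul hp1 (abs_leadingProfile_le (one_le_sqrt.1 hp.2.1)) (abs_nonneg _)
      (sq_nonneg _)
  have hIco : Ico 1 R ⊆ Ioi (0 : ℝ) := fun r hr => one_pos.trans_le hr.1
  have hIoo : Ioo 0 (π / 2) ⊆ Ioo (-(π / 2)) (π / 2) :=
    Ioo_subset_Ioo_left (by linarith [pi_pos])
  rw [← integral_indicator (measurableSet_halfBall 3 R), indicator_halfBall_leadingTerm,
    integral_comp_norm_fst g hcyl hplane, setIntegral_Ioi_prod_univ_eq_polar,
    setIntegral_congr_fun (measurableSet_Ioi.prod measurableSet_Ioo)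
      fun q hq => polar_leadingProfile_indicator_halfAnnulus R hq.1 hq.2,
    Measure.volume_eq_prod, setIntegral_prod_mul, setIntegral_indicator measurableSet_Ico,
    setIntegral_indicator measurableSet_Ioo, inter_eq_right.2 hIco, inter_eq_right.2 hIoo,
    integral_Ico_one_inv hR, setIntegral_angularProfile]
  ring

theorem abs_integrand_sub_leadingTerm_le {x : HSp 3} (hx : 0 ≤ x.2) :
    |x.2 ^ 2 * lapHorizW4 x * Z4 x - leadingTerm x| ≤ 3648 * (1 + ‖x‖) ^ (-5 : ℝ) := by
  have hr0 : 0 ≤ rad x := sqrt_nonneg _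
  have key : |x.2 ^ 2 * lapHorizW4 x * Z4 x - leadingTerm x| ≤ 3648 / (1 + rad x) ^ 5 := by
    rw [integrand_eq_integrandProfile, leadingTerm]
    by_cases h : x ∈ {x : HSp 3 | 1 ≤ rad x}
    · have hr1 : 1 ≤ rad x := h
      rw [indicator_of_mem h]
      calc _ ≤ 114 / rad x ^ 5 := abs_integrandProfile_sub_leadingProfile_le hx (one_le_sqrt.1 h)
        _ ≤ 114 / ((1 + rad x) / 2) ^ 5 := by gcongr; linarith
        _ = 3648 / (1 + rad x) ^ 5 := by field_simp; norm_num
    · have hr1 : rad x < 1 := not_le.1 h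
      have h1 : ‖x.1‖ ^ 2 + x.2 ^ 2 ≤ 1 := sqrt_le_one.1 hr1.le
      have h2 : (1 + rad x) ^ 5 ≤ 2 ^ 5 := by gcongr; linarith
      rw [indicator_of_notMem h, sub_zero, le_div_iff₀ (by positivity)]
      nlinarith [abs_integrandProfile_le hx h1, abs_nonneg (integrandProfile ‖x.1‖ x.2)]
  calc _ ≤ 3648 / (1 + rad x) ^ 5 := key
    _ ≤ 3648 / (1 + ‖x‖) ^ 5 := by gcongr; exact norm_le_rad x
    _ = _ := by rw [rpow_neg (by positivity), div_eq_mul_inv]; norm_cast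

theorem integrableOn_integrand_sub_leadingTerm :
    IntegrableOn (fun x : HSp 3 => x.2 ^ 2 * lapHorizW4 x * Z4 x - leadingTerm x)
      (upperHalf 3) := by
  have hdim : (Module.finrank ℝ (HSp 3) : ℝ) < 5 := by
    rw [Module.finrank_prod, finrank_euclideanSpace_fin, Module.finrank_self]; norm_num
  have hmeas : Measurable fun x : HSp 3 => x.2 ^ 2 * lapHorizW4 x * Z4 x := by
    unfold lapHorizW4 Z4; fun_prop
  have hU : MeasurableSet (upperHalf 3) := measurableSet_lt measurable_const measurable_snd
  refine Integrable.mono' ((integrable_one_add_norm hdim).const_mul 3648).integrableOn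
    (hmeas.sub measurable_leadingTerm).aestronglyMeasurable ?_
  rw [ae_restrict_iff' hU]
  exact ae_of_all _ fun x hx => abs_integrand_sub_leadingTerm_le (le_of_lt hx)

/-- `∫_{B⁴₊(0,R)} x₄² Δ_{x̄}W_{1,0} Z⁰_{1,0} dx = (π/8)|S²| log R + O(1)`
as `R → ∞`, with `|S²| = 4π`. -/
theorem integral_x4sq_laphoriz_W4_Z4_log :
    ∃ C : ℝ, 0 < C ∧ ∀ R : ℝ, 2 ≤ R →
      |(∫ x in {x : HSp 3 | 0 < x.2 ∧ rad x < R}, x.2 ^ 2 * lapHorizW4 x * Z4 x)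
          - Real.pi / 8 * (4 * Real.pi) * Real.log R| ≤ C := by
  have hrem := integrableOn_integrand_sub_leadingTerm
  refine ⟨(∫ x in upperHalf 3, |x.2 ^ 2 * lapHorizW4 x * Z4 x - leadingTerm x|) + 1,
    by positivity, fun R hR => ?_⟩
  have hsub : halfBall 3 R ⊆ upperHalf 3 := fun x hx => hx.1
  have hlead : IntegrableOn leadingTerm (halfBall 3 R) :=
    integrableOn_of_isBounded (measurableSet_halfBall 3 R) (isBounded_halfBall 3 R)
      measurable_leadingTerm.aestronglyMeasurable fun x _ => abs_leadingTerm_le x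
  have hsplit : ∫ x in halfBall 3 R, x.2 ^ 2 * lapHorizW4 x * Z4 x =
      (∫ x in halfBall 3 R, leadingTerm x) +
        ∫ x in halfBall 3 R, (x.2 ^ 2 * lapHorizW4 x * Z4 x - leadingTerm x) := by
    rw [← integral_add hlead (hrem.mono_set hsub)]
    simp only [add_sub_cancel]
  change |(∫ x in halfBall 3 R, x.2 ^ 2 * lapHorizW4 x * Z4 x) - π / 8 * (4 * π) * log R| ≤ _
  rw [hsplit, setIntegral_leadingTerm_halfBall (by linarith), add_sub_cancel_left]
  calc _ ≤ ∫ x in halfBall 3 R, |x.2 ^ 2 * lapHorizW4 x * Z4 x - leadingTerm x| :=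
        abs_integral_le_integral_abs
    _ ≤ ∫ x in upperHalf 3, |x.2 ^ 2 * lapHorizW4 x * Z4 x - leadingTerm x| :=
        setIntegral_mono_set hrem.abs (ae_of_all _ fun _ => abs_nonneg _) hsub.eventuallyLE
    _ ≤ _ := le_add_of_nonneg_right zero_le_one
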